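/- Let λ ⊆ μ be partitions such that s = μ/λ = {a_1, …, a_ℓ} is a string (a_1 topmost), and define the cells b_0, b_1, …, b_ℓ as in the context. Then the cells b_1, …, b_{ℓ−1} all lie in ∂λ \ ∂μ; b_0 lies in ∂λ \ ∂μ if and only if b_0 exists and h_λ(b_0) = k; b_ℓ lies in ∂λ \ ∂μ if and only if b_ℓ exists and h_λ(b_ℓ) = k; and ∂λ \ ∂μ contains no other cells. In particular ∂λ \ ∂μ equals {b_1,…,b_{ℓ−1}}, {b_0,b_1,…,b_{ℓ−1}}, {b_1,…,b_{ℓ−1},b_ℓ}, or {b_0,b_1,…,b_{ℓ−1},b_ℓ} according to whether h_λ(b_0) and h_λ(b_ℓ) are different from k or equal to k. -/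

import Mathlib

open scoped Classical

/-! ## Basic objects: cells, partitions, hooks, `k`-boundary, `k`-shapes -/

abbrev Cell : Type := ℕ × ℕ

/-- A partition, encoded as a weakly decreasing, eventually zero function `ℕ → ℕ`
(rows are 0-indexed; a larger row index means a higher row, French convention). -/
def IsPartition (f : ℕ → ℕ) : Prop :=
  (∀ i j : ℕ, i ≤ j → f j ≤ f i) ∧ ∃ N : ℕ, ∀ i : ℕ, N ≤ i → f i = 0

/-- The cells of the Ferrers diagram of `f`: `(i, j)` with `j < f i` (0-indexed). -/
def cellsOf (f : ℕ → ℕ) : Set Cell := {p : Cell | p.2 < f p.1}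

/-- The conjugate: number of rows with at least `j + 1` cells. -/
noncomputable def conj (f : ℕ → ℕ) (j : ℕ) : ℕ := Nat.card {i : ℕ // j < f i}

/-- Hook length of the cell `p` of `f` (0-indexed version of
`(λ_i − j) + (λ^t_j − i) + 1`). -/
noncomputable def hook (f : ℕ → ℕ) (p : Cell) : ℕ :=
  (f p.1 - p.2) + (conj f p.2 - p.1) - 1

/-- The `k`-boundary: cells of `f` with hook length at most `k`. -/
def bdry (k : ℕ) (f : ℕ → ℕ) : Set Cell := {p : Cell | p ∈ cellsOf f ∧ hook f p ≤ k}

/-- `k`-row shape: the number of cells of the `k`-boundary in row `i`. -/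
noncomputable def rsK (k : ℕ) (f : ℕ → ℕ) (i : ℕ) : ℕ :=
  Nat.card {j : ℕ // (i, j) ∈ bdry k f}

/-- `k`-column shape: the number of cells of the `k`-boundary in column `j`. -/
noncomputable def csK (k : ℕ) (f : ℕ → ℕ) (j : ℕ) : ℕ :=
  Nat.card {i : ℕ // (i, j) ∈ bdry k f}

/-- A `k`-shape: a partition whose `k`-row shape and `k`-column shape are
weakly decreasing. -/
def IsKShape (k : ℕ) (f : ℕ → ℕ) : Prop :=
  IsPartition f ∧ (∀ i j : ℕ, i ≤ j → rsK k f j ≤ rsK k f i) ∧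
    ∀ i j : ℕ, i ≤ j → csK k f j ≤ csK k f i

/-- A `k`-core: a partition with no cell of hook length exactly `k`. -/
def IsKCore (k : ℕ) (f : ℕ → ℕ) : Prop :=
  IsPartition f ∧ ∀ p ∈ cellsOf f, hook f p ≠ k

/-! ## Strings and moves -/

/-- Diagonal index of a cell. -/
def diagIdx (p : Cell) : ℤ := (p.2 : ℤ) - (p.1 : ℤ)

/-- Two cells are contiguous when their diagonal indices differ by `k` or `k+1`. -/
def Contiguous (k : ℕ) (p q : Cell) : Prop :=
  (diagIdx p - diagIdx q).natAbs = k ∨ (diagIdx p - diagIdx q).natAbs = k + 1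

/-- `a` lists the cells of the skew shape `g / f` from top to bottom, with
successive cells contiguous and in strictly lower rows: a string. -/
def IsString (k : ℕ) (f g : ℕ → ℕ) (a : List Cell) : Prop :=
  IsPartition f ∧ IsPartition g ∧ (∀ i, f i ≤ g i) ∧ a ≠ [] ∧
    cellsOf g \ cellsOf f = {x : Cell | x ∈ a} ∧
    List.Chain' (fun x y : Cell => y.1 < x.1 ∧ Contiguous k x y) a

/-- `b` is the leftmost cell of the `k`-boundary of `f` in row `r`. -/
def IsLeftmostBdryInRow (k : ℕ) (f : ℕ → ℕ) (r : ℕ) (b : Cell) : Prop :=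
  b ∈ bdry k f ∧ b.1 = r ∧ ∀ c : ℕ, (r, c) ∈ bdry k f → b.2 ≤ c

/-- `b` is the bottom cell of the `k`-boundary of `f` in column `c`. -/
def IsBottomBdryInCol (k : ℕ) (f : ℕ → ℕ) (c : ℕ) (b : Cell) : Prop :=
  b ∈ bdry k f ∧ b.2 = c ∧ ∀ r : ℕ, (r, c) ∈ bdry k f → b.1 ≤ r

/-- The cell `b₀` (the leftmost boundary cell in the row of the top cell of the
string `a`) exists and has hook length exactly `k`. -/
def B0HookK (k : ℕ) (f : ℕ → ℕ) (a : List Cell) : Prop :=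
  ∃ h b : Cell, a.head? = some h ∧ IsLeftmostBdryInRow k f h.1 b ∧ hook f b = k

/-- The cell `b_ℓ` (the bottom boundary cell in the column of the bottom cell of
the string `a`) exists and has hook length exactly `k`. -/
def BlHookK (k : ℕ) (f : ℕ → ℕ) (a : List Cell) : Prop :=
  ∃ h b : Cell, a.getLast? = some h ∧ IsBottomBdryInCol k f h.2 b ∧ hook f b = k

def RowType (k : ℕ) (f : ℕ → ℕ) (a : List Cell) : Prop := B0HookK k f a ∧ ¬ BlHookK k f a

def ColType (k : ℕ) (f : ℕ → ℕ) (a : List Cell) : Prop := ¬ B0HookK k f a ∧ BlHookK k f a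

def CoverType (k : ℕ) (f : ℕ → ℕ) (a : List Cell) : Prop := ¬ B0HookK k f a ∧ ¬ BlHookK k f a

def CocoverType (k : ℕ) (f : ℕ → ℕ) (a : List Cell) : Prop := B0HookK k f a ∧ BlHookK k f a

/-- `k`-row shape extended to integer row indices (0 outside `ℕ`). -/
noncomputable def rsZ (k : ℕ) (f : ℕ → ℕ) (r : ℤ) : ℤ :=
  if 0 ≤ r then (rsK k f r.toNat : ℤ) else 0

/-- `k`-column shape extended to integer column indices (0 outside `ℕ`). -/
noncomputable def csZ (k : ℕ) (f : ℕ → ℕ) (c : ℤ) : ℤ :=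
  if 0 ≤ c then (csK k f c.toNat : ℤ) else 0

/-- The strings `a = g/f` and `b = g'/f'` are translates of each other: the
cells correspond under translation by a fixed vector `v`, the row/column shape
changes correspond under `v`, and corresponding modified rows/columns have the
same size. -/
def TranslateStrings (k : ℕ) (f g f' g' : ℕ → ℕ) (a b : List Cell) : Prop :=
  ∃ v : ℤ × ℤ, a.length = b.length ∧
    (∀ (i : ℕ) (x y : Cell), a[i]? = some x → b[i]? = some y →
      (y.1 : ℤ) = (x.1 : ℤ) + v.1 ∧ (y.2 : ℤ) = (x.2 : ℤ) + v.2) ∧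
    (∀ r : ℤ, rsZ k g r - rsZ k f r = rsZ k g' (r + v.1) - rsZ k f' (r + v.1) ∧
      (rsZ k g r ≠ rsZ k f r → rsZ k f r = rsZ k f' (r + v.1))) ∧
    (∀ c : ℤ, csZ k g c - csZ k f c = csZ k g' (c + v.2) - csZ k f' (c + v.2) ∧
      (csZ k g c ≠ csZ k f c → csZ k f c = csZ k f' (c + v.2)))

/-- The common data of a row or column move from `lam` to `mu`: a chain of
partitions `lam = shape 0 ⊂ shape 1 ⊂ ⋯ ⊂ shape rank = mu` whose successive
differences are strings of a common length that are translates of each other,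
with `lam` and `mu` both `k`-shapes. -/
structure PreMove (k : ℕ) (lam mu : ℕ → ℕ) where
  rank : ℕ
  len : ℕ
  rank_pos : 0 < rank
  len_pos : 0 < len
  shape : ℕ → ℕ → ℕ
  strs : ℕ → List Cell
  shape_zero : shape 0 = lam
  shape_rank : shape rank = mu
  src_kshape : IsKShape k lam
  tgt_kshape : IsKShape k mu
  isStr : ∀ i < rank, IsString k (shape i) (shape (i + 1)) (strs i)
  strLen : ∀ i < rank, (strs i).length = len
  translates : ∀ i < rank, ∀ j < rank,
    TranslateStrings k (shape i) (shape (i + 1)) (shape j) (shape (j + 1)) (strs i) (strs j)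

/-- A row move: all strings are row-type and their top cells occur in
consecutive columns from left to right. -/
def PreMove.IsRowMove {k : ℕ} {lam mu : ℕ → ℕ} (m : PreMove k lam mu) : Prop :=
  (∀ i < m.rank, RowType k (m.shape i) (m.strs i)) ∧
    ∀ i : ℕ, i + 1 < m.rank → ∀ x y : Cell,
      (m.strs i).head? = some x → (m.strs (i + 1)).head? = some y → y.2 = x.2 + 1

/-- A column move: all strings are column-type and their bottom cells occur in
consecutive rows from bottom to top. -/
def PreMove.IsColMove {k : ℕ} {lam mu : ℕ → ℕ} (m : PreMove k lam mu) : Prop :=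
  (∀ i < m.rank, ColType k (m.shape i) (m.strs i)) ∧
    ∀ i : ℕ, i + 1 < m.rank → ∀ x y : Cell,
      (m.strs i).getLast? = some x → (m.strs (i + 1)).getLast? = some y → y.1 = x.1 + 1

/-- A move is a row move or a column move. -/
def PreMove.IsMove {k : ℕ} {lam mu : ℕ → ℕ} (m : PreMove k lam mu) : Prop :=
  m.IsRowMove ∨ m.IsColMove

/-- There is a move from `lam` to `mu`. -/
def MoveRel (k : ℕ) (lam mu : ℕ → ℕ) : Prop := ∃ m : PreMove k lam mu, m.IsMove

/-- A `f`-addable corner: a cell outside `f` which together with `f` forms the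
diagram of a partition. -/
def IsAddableCorner (f : ℕ → ℕ) (x : Cell) : Prop :=
  x ∉ cellsOf f ∧ ∃ g : ℕ → ℕ, IsPartition g ∧ cellsOf g = cellsOf f ∪ {x}

/-! ## Strips -/

/-- The skew shape `g / f` has at most one cell in each column. -/
def OneCellPerCol (f g : ℕ → ℕ) : Prop :=
  ∀ x y : Cell, x ∈ cellsOf g \ cellsOf f → y ∈ cellsOf g \ cellsOf f → x.2 = y.2 → x = y

/-- The skew shape `g / f` has at most one cell in each row. -/
def OneCellPerRow (f g : ℕ → ℕ) : Prop :=
  ∀ x y : Cell, x ∈ cellsOf g \ cellsOf f → y ∈ cellsOf g \ cellsOf f → x.1 = y.1 → x = y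

/-- `mu / lam` is a strip of rank `r` of `k`-shapes: a horizontal strip such
that `rs(mu)/rs(lam)` is a horizontal strip and `cs(mu)/cs(lam)` is a vertical
strip, both of size `r`. -/
def IsStrip (k r : ℕ) (lam mu : ℕ → ℕ) : Prop :=
  IsKShape k lam ∧ IsKShape k mu ∧ (∀ i, lam i ≤ mu i) ∧ OneCellPerCol lam mu ∧
    (∀ i, rsK k lam i ≤ rsK k mu i) ∧ OneCellPerCol (rsK k lam) (rsK k mu) ∧
    (∀ j, csK k lam j ≤ csK k mu j) ∧ OneCellPerRow (csK k lam) (csK k mu) ∧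
    (∑ᶠ i : ℕ, (rsK k mu i - rsK k lam i)) = r ∧
    (∑ᶠ j : ℕ, (csK k mu j - csK k lam j)) = r

/-- `mu / lam` is a strip (of some rank). -/
def IsStripAny (k : ℕ) (lam mu : ℕ → ℕ) : Prop := ∃ r : ℕ, IsStrip k r lam mu

/-- A maximal strip: it admits no `lam`-augmentation move. -/
def MaximalStrip (k : ℕ) (lam mu : ℕ → ℕ) : Prop :=
  IsStripAny k lam mu ∧ ¬ ∃ nu : ℕ → ℕ, MoveRel k mu nu ∧ IsStripAny k lam nu

/-- A reverse-maximal strip `mu / rho`: there is no move from `rho` to a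
`k`-shape `rho'` with `mu / rho'` again a strip. -/
def ReverseMaximalStrip (k : ℕ) (rho mu : ℕ → ℕ) : Prop :=
  IsStripAny k rho mu ∧ ¬ ∃ rho' : ℕ → ℕ, MoveRel k rho rho' ∧ IsStripAny k rho' mu

/-- Adjoin the cell `a` at the end of its row. -/
def addCell (f : ℕ → ℕ) (a : Cell) : ℕ → ℕ := Function.update f a.1 (f a.1 + 1)

/-- A lower augmentable corner of the strip `mu / lam`: a `mu`-addable corner
`a` whose adjunction expels from the `k`-boundary a cell of `∂mu` in the row of
`a` and in a modified column of the strip. -/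
def LowerAugCorner (k : ℕ) (lam mu : ℕ → ℕ) (a : Cell) : Prop :=
  IsAddableCorner mu a ∧ ∃ b : Cell, b ∈ bdry k mu ∧ b.1 = a.1 ∧
    csK k mu b.2 = csK k lam b.2 + 1 ∧ k < hook (addCell mu a) b

/-- An upper augmentable corner of the strip `mu / lam`: a `mu`-addable corner
`a`, not lying directly on top of a cell of the strip, whose adjunction expels
from the `k`-boundary a cell of `∂mu` in the column of `a` and in a modified
row of the strip. -/
def UpperAugCorner (k : ℕ) (lam mu : ℕ → ℕ) (a : Cell) : Prop :=
  IsAddableCorner mu a ∧ (a.1 = 0 ∨ (a.1 - 1, a.2) ∉ cellsOf mu \ cellsOf lam) ∧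
    ∃ b : Cell, b ∈ bdry k mu ∧ b.2 = a.2 ∧
      rsK k mu b.1 = rsK k lam b.1 + 1 ∧ k < hook (addCell mu a) b

/-! ## Paths in the `k`-shape poset and their equivalence -/

/-- Charge of a step from `f` to `g`: 0 for a row move or an empty move, the
number of cells for a column move. -/
noncomputable def stepCharge (k : ℕ) (f g : ℕ → ℕ) : ℕ :=
  if ∃ m : PreMove k f g, m.IsColMove then (cellsOf g \ cellsOf f).ncard else 0

/-- A path in the `k`-shape poset from `lam` to `nu`, recorded by its list of
vertices; each step is an empty move or a move. -/
def IsPathList (k : ℕ) (lam nu : ℕ → ℕ) (p : List (ℕ → ℕ)) : Prop :=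
  p.head? = some lam ∧ p.getLast? = some nu ∧
    List.Chain' (fun f g => f = g ∨ MoveRel k f g) p

/-- The charge of a path: the sum of the charges of its steps. -/
noncomputable def pathCharge (k : ℕ) (p : List (ℕ → ℕ)) : ℕ :=
  (List.zipWith (stepCharge k) p p.tail).sum

/-- The equivalence on paths generated by diamond equivalences (and by
insertion of empty moves). -/
inductive PathEquiv (k : ℕ) : List (ℕ → ℕ) → List (ℕ → ℕ) → Prop
  | refl (p : List (ℕ → ℕ)) : PathEquiv k p p
  | symm {p q : List (ℕ → ℕ)} : PathEquiv k p q → PathEquiv k q p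
  | trans {p q r : List (ℕ → ℕ)} : PathEquiv k p q → PathEquiv k q r → PathEquiv k p r
  | pad (pre post : List (ℕ → ℕ)) (κ : ℕ → ℕ) :
      PathEquiv k (pre ++ κ :: post) (pre ++ κ :: κ :: post)
  | diamond (pre post : List (ℕ → ℕ)) (κ μ ν γ : ℕ → ℕ)
      (h1 : κ = μ ∨ MoveRel k κ μ) (h2 : μ = γ ∨ MoveRel k μ γ)
      (h3 : κ = ν ∨ MoveRel k κ ν) (h4 : ν = γ ∨ MoveRel k ν γ)
      (hcells : (cellsOf μ \ cellsOf κ) ∪ (cellsOf γ \ cellsOf μ)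
          = (cellsOf ν \ cellsOf κ) ∪ (cellsOf γ \ cellsOf ν))
      (hcharge : stepCharge k κ μ + stepCharge k μ γ = stepCharge k κ ν + stepCharge k ν γ) :
      PathEquiv k (pre ++ κ :: μ :: γ :: post) (pre ++ κ :: ν :: γ :: post)

/-- The type of paths in the `k`-shape poset from `lam` to `nu`. -/
def PathsTo (k : ℕ) (lam nu : ℕ → ℕ) : Type :=
  {p : List (ℕ → ℕ) // IsPathList k lam nu p}

def kPathSetoid (k : ℕ) (lam nu : ℕ → ℕ) : Setoid (PathsTo k lam nu) where
  r p q := PathEquiv k p.1 q.1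
  iseqv := ⟨fun p => PathEquiv.refl p.1, fun h => PathEquiv.symm h,
    fun h h' => PathEquiv.trans h h'⟩

/-- Equivalence classes of paths from `lam` to `nu` in the `k`-shape poset. -/
def Patheq (k : ℕ) (lam nu : ℕ → ℕ) : Type := Quotient (kPathSetoid k lam nu)

/-! ## Tableaux -/

/-- A step of a `k`-shape tableau: a strip of rank strictly less than `k`. -/
def StripStep (k : ℕ) (f g : ℕ → ℕ) : Prop := ∃ r : ℕ, r < k ∧ IsStrip k r f g

/-- A `k`-shape tableau of shape `mu / lam`, recorded by its chain of shapes. -/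
def IsTableau (k : ℕ) (lam mu : ℕ → ℕ) (T : List (ℕ → ℕ)) : Prop :=
  T.head? = some lam ∧ T.getLast? = some mu ∧ List.Chain' (StripStep k) T

/-- A maximal `k`-shape tableau: each of its strips is maximal. -/
def IsMaxTableau (k : ℕ) (lam mu : ℕ → ℕ) (T : List (ℕ → ℕ)) : Prop :=
  IsTableau k lam mu T ∧ List.Chain' (MaximalStrip k) T

/-- A reverse-maximal `k`-shape tableau: each of its strips is reverse-maximal. -/
def IsRevMaxTableau (k : ℕ) (lam mu : ℕ → ℕ) (T : List (ℕ → ℕ)) : Prop :=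
  IsTableau k lam mu T ∧ List.Chain' (ReverseMaximalStrip k) T

/-- The rank of the strip `g / f`. -/
noncomputable def stripRank (k : ℕ) (f g : ℕ → ℕ) : ℕ :=
  ∑ᶠ i : ℕ, (rsK k g i - rsK k f i)

/-- The weight of a tableau: the list of ranks of its strips. -/
noncomputable def tabWeight (k : ℕ) (T : List (ℕ → ℕ)) : List ℕ :=
  List.zipWith (stripRank k) T T.tail

/-- The indent of a cell `b` in the skew shape `mu / lam`: the number of its
cells strictly to the left of `b` in the row of `b`. -/
noncomputable def indent (lam mu : ℕ → ℕ) (b : Cell) : ℕ :=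
  Nat.card {x : Cell // x ∈ cellsOf mu \ cellsOf lam ∧ x.1 = b.1 ∧ x.2 < b.2}

/-- A `lam`-augmentation path from `mu` to `nu`: a path in the `k`-shape poset
all of whose vertices `rho` satisfy that `rho / lam` is a strip. -/
def IsAugPath (k : ℕ) (lam mu nu : ℕ → ℕ) (p : List (ℕ → ℕ)) : Prop :=
  IsPathList k mu nu p ∧ ∀ rho ∈ p, IsStripAny k lam rho

/-!
Along a string the rows strictly decrease and, since `k ≥ 2`, the columns strictly increase, so
`μ/λ` has at most one cell in each row and each column, and every string cell `(r, c)` is an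
addable corner of `λ` with `λ^t_c = r`. Hence for a cell `x` of `λ`, `h_μ(x) - h_λ(x)` counts
whether the row and whether the column of `x` meet the string, and `x ∈ ∂λ \ ∂μ` exactly when
this increment pushes the hook past `k`. A cell in the row of `a_t` and the column of `a_s` has
hook `diag a_t - diag a_s - 1`, which is `≤ k` only for consecutive cells. A cell meeting the
string only in its row (column) needs hook exactly `k`; in the row of `a_{i+1}` (column of `a_i`)
the hooks jump across `k` at the cell `b_i`, so this forces the row of `a_1` (column of `a_ℓ`).
-/

namespace IsPartition

variable {f : ℕ → ℕ}

theorem lt_conj_iff (hf : IsPartition f) {i j : ℕ} : i < conj f j ↔ j < f i := by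
  obtain ⟨hanti, N, hN⟩ := hf
  have hex : ∃ m, f m ≤ j := ⟨N, by simp [hN N le_rfl]⟩
  have hS : {i | j < f i} = Set.Iio (Nat.find hex) := by
    ext i
    simp only [Set.mem_ofPred_eq, Set.mem_Iio, Nat.lt_find_iff, not_le]
    exact ⟨fun h m hm => h.trans_le (hanti m i hm), fun h => h i le_rfl⟩
  have hconj : conj f j = Nat.find hex := by
    rw [conj, ← Set.coe_ofPred, Nat.card_coe_set_eq, hS, Set.ncard_Iio_nat]
  rw [hconj, Nat.lt_find_iff]
  exact ⟨fun h => not_le.1 (h i le_rfl), fun h m hm => (h.trans_le (hanti m i hm)).not_ge⟩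

theorem apply_conj_le (hf : IsPartition f) (j : ℕ) : f (conj f j) ≤ j :=
  not_lt.1 (mt hf.lt_conj_iff.2 (lt_irrefl _))

theorem conj_eq (hf : IsPartition f) {j m : ℕ} (hm : f m ≤ j) (hlt : ∀ i < m, j < f i) :
    conj f j = m := by
  refine le_antisymm (not_lt.1 fun h => ?_) (not_lt.1 fun h => ?_)
  · exact (hf.lt_conj_iff.1 h).not_ge hm
  · exact (hlt _ h).not_ge (hf.apply_conj_le j)

theorem conj_antitone (hf : IsPartition f) : Antitone (conj f) := fun j _ hjj' =>
  not_lt.1 fun h => (hf.lt_conj_iff.1 h).not_ge ((hf.apply_conj_le j).trans hjj')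

theorem hook_eq (hf : IsPartition f) {x : Cell} (hx : x ∈ cellsOf f) :
    (hook f x : ℤ) = f x.1 + conj f x.2 - x.2 - x.1 - 1 := by
  have hleg : x.1 < conj f x.2 := hf.lt_conj_iff.2 hx
  have harm : x.2 < f x.1 := hx
  unfold hook
  omega

theorem hook_lt_hook_of_snd_lt (hf : IsPartition f) {x : Cell} (hx : x ∈ cellsOf f) {c : ℕ}
    (hc : c < x.2) : hook f x < hook f (x.1, c) := by
  have hxc : ((x.1, c) : Cell) ∈ cellsOf f := hc.trans hx
  have := hf.conj_antitone hc.le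
  have := hf.hook_eq hx
  have := hf.hook_eq hxc
  simp only at *
  omega

theorem hook_lt_hook_of_fst_lt (hf : IsPartition f) {x : Cell} (hx : x ∈ cellsOf f) {r : ℕ}
    (hr : r < x.1) : hook f x < hook f (r, x.2) := by
  have hrx : f x.1 ≤ f r := hf.1 r x.1 hr.le
  have hxr : ((r, x.2) : Cell) ∈ cellsOf f := lt_of_lt_of_le hx hrx
  have := hf.hook_eq hx
  have := hf.hook_eq hxr
  simp only at *
  omega

end IsPartition

section SkewShape

variable {lam mu : ℕ → ℕ}

theorem mem_cellsOf_of_le (hle : ∀ i, lam i ≤ mu i) {x : Cell} (hx : x ∈ cellsOf lam) :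
    x ∈ cellsOf mu :=
  lt_of_lt_of_le hx (hle x.1)

theorem mem_bdry_sdiff_iff (hle : ∀ i, lam i ≤ mu i) {k : ℕ} {x : Cell} :
    x ∈ bdry k lam \ bdry k mu ↔ x ∈ bdry k lam ∧ k < hook mu x := by
  refine and_congr_right fun hx => ?_
  simp only [bdry, Set.mem_ofPred_eq, mem_cellsOf_of_le hle hx.1, true_and, not_le]

theorem mem_bdry_sdiff_iff_of_hook_eq_succ (hle : ∀ i, lam i ≤ mu i) {k : ℕ} {x : Cell}
    (hx : x ∈ bdry k lam) (hhook : hook mu x = hook lam x + 1) :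
    x ∈ bdry k lam \ bdry k mu ↔ hook lam x = k := by
  have := hx.2
  rw [mem_bdry_sdiff_iff hle, hhook, and_iff_right hx]
  omega

theorem OneCellPerRow.apply_eq (hle : ∀ i, lam i ≤ mu i) (hrow : OneCellPerRow lam mu) (i : ℕ) :
    mu i = lam i + if ∃ y ∈ cellsOf mu \ cellsOf lam, y.1 = i then 1 else 0 := by
  split_ifs with h
  · obtain ⟨y, ⟨hyM, hyL⟩, rfl⟩ := h
    have hyL : lam y.1 ≤ y.2 := not_lt.1 hyL
    have hyM : y.2 < mu y.1 := hyM
    refine le_antisymm (not_lt.1 fun hlt => ?_) (by omega)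
    have := hrow (y.1, lam y.1) (y.1, lam y.1 + 1)
      ⟨show lam y.1 < mu y.1 by omega, lt_irrefl (lam y.1)⟩
      ⟨show lam y.1 + 1 < mu y.1 by omega, fun h => (Nat.lt_succ_self _).not_ge h.le⟩ rfl
    simp at this
  · exact le_antisymm (not_lt.1 fun hlt => h ⟨(i, lam i), ⟨hlt, lt_irrefl (lam i)⟩, rfl⟩) (hle i)

theorem OneCellPerCol.conj_eq_fst (hlam : IsPartition lam) (hmu : IsPartition mu)
    (hcol : OneCellPerCol lam mu) {x : Cell} (hx : x ∈ cellsOf mu \ cellsOf lam) :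
    conj lam x.2 = x.1 := by
  refine hlam.conj_eq (not_lt.1 hx.2) fun i hi => not_le.1 fun hxi => hi.ne ?_
  have hix : ((i, x.2) : Cell) ∈ cellsOf mu \ cellsOf lam :=
    ⟨lt_of_lt_of_le hx.1 (hmu.1 i x.1 hi.le), not_lt.2 hxi⟩
  exact congrArg Prod.fst (hcol _ _ hix hx rfl)

theorem OneCellPerCol.conj_apply_eq (hlam : IsPartition lam) (hmu : IsPartition mu)
    (hle : ∀ i, lam i ≤ mu i) (hcol : OneCellPerCol lam mu) (j : ℕ) :
    conj mu j = conj lam j + if ∃ y ∈ cellsOf mu \ cellsOf lam, y.2 = j then 1 else 0 := by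
  split_ifs with h
  · obtain ⟨y, hy, rfl⟩ := h
    rw [hcol.conj_eq_fst hlam hmu hy]
    refine hmu.conj_eq (not_lt.1 fun hlt => ?_) fun i hi => ?_
    · have hy' : ((y.1 + 1, y.2) : Cell) ∈ cellsOf mu \ cellsOf lam :=
        ⟨hlt, not_lt.2 ((hlam.1 y.1 (y.1 + 1) (Nat.le_succ _)).trans (not_lt.1 hy.2))⟩
      simpa using congrArg Prod.fst (hcol _ _ hy' hy rfl)
    · exact lt_of_lt_of_le hy.1 (hmu.1 i y.1 (Nat.lt_succ_iff.1 hi))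
  · refine (hmu.conj_eq (not_lt.1 fun hlt =>
      h ⟨(conj lam j, j), ⟨hlt, not_lt.2 (hlam.apply_conj_le j)⟩, rfl⟩)
      fun i hi => lt_of_lt_of_le (hlam.lt_conj_iff.1 hi) (hle i)).trans (add_zero _).symm

theorem hook_eq_hook_add_ite (hlam : IsPartition lam) (hmu : IsPartition mu)
    (hle : ∀ i, lam i ≤ mu i) (hrow : OneCellPerRow lam mu) (hcol : OneCellPerCol lam mu)
    {x : Cell} (hx : x ∈ cellsOf lam) :
    hook mu x = hook lam x + (if ∃ y ∈ cellsOf mu \ cellsOf lam, y.1 = x.1 then 1 else 0) +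
      (if ∃ y ∈ cellsOf mu \ cellsOf lam, y.2 = x.2 then 1 else 0) := by
  have hL := hlam.hook_eq hx
  have hM := hmu.hook_eq (mem_cellsOf_of_le hle hx)
  rw [hrow.apply_eq hle, hcol.conj_apply_eq hlam hmu hle] at hM
  push_cast at hM
  split_ifs at hM ⊢ <;> omega

end SkewShape

namespace IsString

variable {k : ℕ} {lam mu : ℕ → ℕ} {a : List Cell}

theorem mem_iff (hs : IsString k lam mu a) {x : Cell} :
    x ∈ a ↔ x ∈ cellsOf mu \ cellsOf lam := by
  rw [hs.2.2.2.2.1]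
  rfl

theorem pairwise_fst_gt (hs : IsString k lam mu a) : a.Pairwise (fun x y => y.1 < x.1) :=
  List.pairwise_map.1
    ((List.isChain_map (R := (· > ·)) Prod.fst).2 (hs.2.2.2.2.2.imp fun _ _ h => h.1)).pairwise

theorem fst_lt_fst_of_lt (hs : IsString k lam mu a) {s t : ℕ} (hst : s < t) (ht : t < a.length) :
    a[t].1 < a[s].1 :=
  List.pairwise_iff_getElem.1 hs.pairwise_fst_gt s t _ ht hst

theorem oneCellPerRow (hs : IsString k lam mu a) : OneCellPerRow lam mu := fun _ _ hx hy =>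
  List.inj_on_of_nodup_map ((List.pairwise_map.2 hs.pairwise_fst_gt).imp ne_of_gt)
    (hs.mem_iff.2 hx) (hs.mem_iff.2 hy)

theorem mu_apply_eq (hs : IsString k lam mu a) (i : ℕ) :
    mu i = lam i + if ∃ y ∈ a, y.1 = i then 1 else 0 := by
  simp_rw [hs.mem_iff]
  exact hs.oneCellPerRow.apply_eq hs.2.2.1 i

theorem snd_eq (hs : IsString k lam mu a) {x : Cell} (hx : x ∈ a) : x.2 = lam x.1 := by
  have hrow := hs.mu_apply_eq x.1
  rw [if_pos ⟨x, hx, rfl⟩] at hrow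
  have hx' := hs.mem_iff.1 hx
  have : x.2 < mu x.1 := hx'.1
  have : lam x.1 ≤ x.2 := not_lt.1 hx'.2
  omega

theorem fst_succ_lt_and_contiguous (hs : IsString k lam mu a) {t : ℕ} (ht : t + 1 < a.length) :
    a[t + 1].1 < a[t].1 ∧ Contiguous k a[t] a[t + 1] :=
  List.isChain_iff_getElem.1 hs.2.2.2.2.2 t ht

theorem fst_le_or_le_fst (hs : IsString k lam mu a) {t : ℕ} (ht : t + 1 < a.length) {y : Cell}
    (hy : y ∈ a) : y.1 ≤ a[t + 1].1 ∨ a[t].1 ≤ y.1 := by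
  obtain ⟨u, hu, rfl⟩ := List.getElem_of_mem hy
  rcases lt_trichotomy u t with hut | rfl | htu
  · exact Or.inr (hs.fst_lt_fst_of_lt hut (by omega)).le
  · exact Or.inr le_rfl
  · rcases (Nat.succ_le_of_lt htu).eq_or_lt with rfl | htu
    · exact Or.inl le_rfl
    · exact Or.inl (hs.fst_lt_fst_of_lt htu hu).le

theorem snd_lt_snd_succ (hs : IsString k lam mu a) (hk : 2 ≤ k) {t : ℕ}
    (ht : t + 1 < a.length) : a[t].2 < a[t + 1].2 := by
  obtain ⟨hrow, hcont⟩ := hs.fst_succ_lt_and_contiguous ht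
  have hp := hs.snd_eq (List.getElem_mem (n := t) (by omega))
  have hq := hs.snd_eq (List.getElem_mem ht)
  have hmono : lam a[t].1 ≤ lam a[t + 1].1 := hs.1.1 _ _ hrow.le
  refine lt_of_le_of_ne (by omega) fun heq => ?_
  have hgap : k ≤ a[t].1 - a[t + 1].1 := by
    simp only [Contiguous, diagIdx] at hcont
    omega
  -- With a common column `c`, the row just below `a[t]` lies strictly between the two rows, so
  -- it misses the string, yet `mu` is `c + 1` in the row above it and `lam` is `c` further down.
  have hfree : ¬ ∃ y ∈ a, y.1 = a[t].1 - 1 := fun ⟨y, hy, hy1⟩ => by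
    rcases hs.fst_le_or_le_fst ht hy with h | h <;> omega
  have hmid := hs.mu_apply_eq (a[t].1 - 1)
  have htop := hs.mu_apply_eq a[t].1
  rw [if_neg hfree] at hmid
  rw [if_pos ⟨_, List.getElem_mem _, rfl⟩] at htop
  have := hs.2.1.1 (a[t].1 - 1) a[t].1 (Nat.sub_le _ _)
  have := hs.1.1 a[t + 1].1 (a[t].1 - 1) (by omega)
  omega

theorem snd_lt_snd_of_lt (hs : IsString k lam mu a) (hk : 2 ≤ k) {s t : ℕ} (hst : s < t)
    (ht : t < a.length) : a[s].2 < a[t].2 := by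
  have hchain : a.IsChain (fun x y => x.2 < y.2) :=
    List.isChain_iff_getElem.2 fun _ h => hs.snd_lt_snd_succ hk h
  exact List.pairwise_iff_getElem.1
    (List.pairwise_map.1 ((List.isChain_map (R := (· < ·)) Prod.snd).2 hchain).pairwise)
    s t _ ht hst

theorem snd_le_snd_of_le (hs : IsString k lam mu a) (hk : 2 ≤ k) {s t : ℕ} (hst : s ≤ t)
    (ht : t < a.length) : a[s].2 ≤ a[t].2 := by
  rcases hst.eq_or_lt with rfl | hst
  · exact le_rfl
  · exact (hs.snd_lt_snd_of_lt hk hst ht).le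

theorem oneCellPerCol (hs : IsString k lam mu a) (hk : 2 ≤ k) : OneCellPerCol lam mu := by
  intro x y hx hy hxy
  obtain ⟨u, hu, rfl⟩ := List.getElem_of_mem (hs.mem_iff.2 hx)
  obtain ⟨v, hv, rfl⟩ := List.getElem_of_mem (hs.mem_iff.2 hy)
  rcases lt_trichotomy u v with huv | rfl | hvu
  · exact absurd hxy (hs.snd_lt_snd_of_lt hk huv hv).ne
  · rfl
  · exact absurd hxy (hs.snd_lt_snd_of_lt hk hvu hu).ne'

theorem conj_lam_eq (hs : IsString k lam mu a) (hk : 2 ≤ k) {x : Cell} (hx : x ∈ a) :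
    conj lam x.2 = x.1 :=
  (hs.oneCellPerCol hk).conj_eq_fst hs.1 hs.2.1 (hs.mem_iff.1 hx)

theorem hook_mu_eq (hs : IsString k lam mu a) (hk : 2 ≤ k) {x : Cell} (hx : x ∈ cellsOf lam) :
    hook mu x = hook lam x + (if ∃ y ∈ a, y.1 = x.1 then 1 else 0) +
      (if ∃ y ∈ a, y.2 = x.2 then 1 else 0) := by
  simp_rw [hs.mem_iff]
  exact hook_eq_hook_add_ite hs.1 hs.2.1 hs.2.2.1 hs.oneCellPerRow (hs.oneCellPerCol hk) hx

theorem diagIdx_succ (hs : IsString k lam mu a) (hk : 2 ≤ k) {t : ℕ} (ht : t + 1 < a.length) :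
    diagIdx a[t + 1] = diagIdx a[t] + k ∨ diagIdx a[t + 1] = diagIdx a[t] + (k + 1) := by
  obtain ⟨hrow, hcont⟩ := hs.fst_succ_lt_and_contiguous ht
  have hcol := hs.snd_lt_snd_succ hk ht
  simp only [Contiguous, diagIdx] at hcont ⊢
  omega

theorem mem_cellsOf_and_hook_eq_diagIdx_sub (hs : IsString k lam mu a) (hk : 2 ≤ k) {s t : ℕ}
    (hst : s < t) (ht : t < a.length) :
    ((a[t].1, a[s].2) : Cell) ∈ cellsOf lam ∧
      (hook lam (a[t].1, a[s].2) : ℤ) = diagIdx a[t] - diagIdx a[s] - 1 := by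
  have hcol := hs.snd_lt_snd_of_lt hk hst ht
  have hrow := hs.snd_eq (List.getElem_mem ht)
  have hmem : ((a[t].1, a[s].2) : Cell) ∈ cellsOf lam := show a[s].2 < lam a[t].1 by omega
  refine ⟨hmem, ?_⟩
  rw [hs.1.hook_eq hmem, hs.conj_lam_eq hk (List.getElem_mem _), diagIdx, diagIdx, ← hrow]
  ring

theorem mem_bdry_sdiff_of_succ (hs : IsString k lam mu a) (hk : 2 ≤ k) {t : ℕ}
    (ht : t + 1 < a.length) : ((a[t + 1].1, a[t].2) : Cell) ∈ bdry k lam \ bdry k mu := by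
  obtain ⟨hmem, hhook⟩ := hs.mem_cellsOf_and_hook_eq_diagIdx_sub hk (Nat.lt_add_one t) ht
  have hmu := hs.hook_mu_eq hk hmem
  rw [if_pos ⟨_, List.getElem_mem ht, rfl⟩, if_pos ⟨_, List.getElem_mem (n := t) (by omega), rfl⟩]
    at hmu
  have hgap := hs.diagIdx_succ hk ht
  rw [mem_bdry_sdiff_iff hs.2.2.1]
  exact ⟨⟨hmem, by omega⟩, by omega⟩

theorem head_snd_le (hs : IsString k lam mu a) (hk : 2 ≤ k) {h y : Cell}
    (hh : a.head? = some h) (hy : y ∈ a) : h.2 ≤ y.2 := by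
  obtain ⟨u, hu, rfl⟩ := List.getElem_of_mem hy
  obtain ⟨h0, rfl⟩ := List.getElem?_eq_some_iff.1 (List.head?_eq_getElem? ▸ hh)
  exact hs.snd_le_snd_of_le hk (Nat.zero_le u) hu

theorem snd_le_getLast_snd (hs : IsString k lam mu a) (hk : 2 ≤ k) {h y : Cell}
    (hh : a.getLast? = some h) (hy : y ∈ a) : y.2 ≤ h.2 := by
  obtain ⟨u, hu, rfl⟩ := List.getElem_of_mem hy
  obtain ⟨hl, rfl⟩ := List.getElem?_eq_some_iff.1 (List.getLast?_eq_getElem? ▸ hh)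
  exact hs.snd_le_snd_of_le hk (by omega) hl

theorem mem_bdry_sdiff_iff_of_fst_eq_head (hs : IsString k lam mu a) (hk : 2 ≤ k) {h x : Cell}
    (hh : a.head? = some h) (hx : x ∈ bdry k lam) (hrow : x.1 = h.1) :
    x ∈ bdry k lam \ bdry k mu ↔ hook lam x = k := by
  have hmem : h ∈ a := List.mem_of_mem_head? hh
  have hcol : ¬ ∃ y ∈ a, y.2 = x.2 := fun ⟨y, hy, hyx⟩ => by
    have := hs.head_snd_le hk hh hy
    have := hs.snd_eq hmem
    have : x.2 < lam h.1 := hrow ▸ hx.1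
    omega
  refine mem_bdry_sdiff_iff_of_hook_eq_succ hs.2.2.1 hx ?_
  rw [hs.hook_mu_eq hk hx.1, if_pos ⟨h, hmem, hrow.symm⟩, if_neg hcol]

theorem mem_bdry_sdiff_iff_of_snd_eq_getLast (hs : IsString k lam mu a) (hk : 2 ≤ k)
    {h x : Cell} (hh : a.getLast? = some h) (hx : x ∈ bdry k lam) (hcol : x.2 = h.2) :
    x ∈ bdry k lam \ bdry k mu ↔ hook lam x = k := by
  have hmem : h ∈ a := List.mem_of_getLast? hh
  have hrow : ¬ ∃ y ∈ a, y.1 = x.1 := fun ⟨y, hy, hyx⟩ => by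
    have := hs.snd_le_getLast_snd hk hh hy
    have := hs.snd_eq hy
    have : x.2 < lam x.1 := hx.1
    rw [hyx] at *
    omega
  refine mem_bdry_sdiff_iff_of_hook_eq_succ hs.2.2.1 hx ?_
  rw [hs.hook_mu_eq hk hx.1, if_neg hrow, if_pos ⟨h, hmem, hcol.symm⟩]

theorem hook_ne_of_fst_eq_succ (hs : IsString k lam mu a) (hk : 2 ≤ k) {t : ℕ}
    (ht : t + 1 < a.length) {x : Cell} (hx : x ∈ cellsOf lam) (hrow : x.1 = a[t + 1].1)
    (hcol : x.2 ≠ a[t].2) : hook lam x ≠ k := by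
  have hq : a[t] ∈ a := List.getElem_mem _
  have hp := hs.snd_eq (List.getElem_mem ht)
  have hconj := hs.conj_lam_eq hk hq
  have hqsnd := hs.snd_eq hq
  have hgap := hs.diagIdx_succ hk ht
  have hhook := hs.1.hook_eq hx
  rw [hrow, ← hp] at hhook
  simp only [diagIdx] at hgap
  -- With `g` the diagonal gap, the hooks along this row are `g - 1` in column `a[t].2`,
  -- at least `g + 1` to its left and at most `g - 2` to its right.
  rcases lt_or_gt_of_ne hcol with hlt | hgt
  · have : a[t].1 < conj lam x.2 := hs.1.lt_conj_iff.2 (hqsnd ▸ hlt)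
    omega
  · have := hs.1.conj_antitone hgt.le
    omega

theorem hook_ne_of_snd_eq (hs : IsString k lam mu a) (hk : 2 ≤ k) {t : ℕ}
    (ht : t + 1 < a.length) {x : Cell} (hx : x ∈ cellsOf lam) (hcol : x.2 = a[t].2)
    (hrow : x.1 ≠ a[t + 1].1) : hook lam x ≠ k := by
  have hq : a[t] ∈ a := List.getElem_mem _
  have hp := hs.snd_eq (List.getElem_mem ht)
  have hconj := hs.conj_lam_eq hk hq
  have hgap := hs.diagIdx_succ hk ht
  have hhook := hs.1.hook_eq hx
  rw [hcol, hconj] at hhook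
  simp only [diagIdx] at hgap
  -- With `g` the diagonal gap, the hooks down this column are `g - 1` in row `a[t + 1].1`,
  -- at least `g + 1` below it and at most `g - 2` above it.
  rcases lt_or_gt_of_ne hrow with hlt | hgt
  · have : a[t + 1].2 < lam x.1 :=
      hs.1.lt_conj_iff.1 (hs.conj_lam_eq hk (List.getElem_mem ht) ▸ hlt)
    omega
  · have := hs.1.1 _ _ hgt.le
    have : x.1 < a[t].1 := hconj ▸ hs.1.lt_conj_iff.2 (hcol ▸ hx)
    omega

theorem exists_succ_of_fst_snd_mem (hs : IsString k lam mu a) (hk : 2 ≤ k) {x : Cell}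
    (hx : x ∈ bdry k lam) (hR : ∃ y ∈ a, y.1 = x.1) (hC : ∃ y ∈ a, y.2 = x.2) :
    ∃ i : ℕ, 1 ≤ i ∧ i < a.length ∧ ∃ p q : Cell, a[i]? = some p ∧ a[i - 1]? = some q ∧
      x = (p.1, q.2) := by
  obtain ⟨_, hy, hyx⟩ := hR
  obtain ⟨t, ht, rfl⟩ := List.getElem_of_mem hy
  obtain ⟨_, hz, hzx⟩ := hC
  obtain ⟨s, hsl, rfl⟩ := List.getElem_of_mem hz
  obtain rfl : x = (a[t].1, a[s].2) := Prod.ext hyx.symm hzx.symm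
  have hst : s < t := by
    by_contra! hts
    have := hs.snd_le_snd_of_le hk hts hsl
    have := hs.snd_eq hy
    have : a[s].2 < lam a[t].1 := hx.1
    omega
  obtain rfl : t = s + 1 := by
    by_contra hne
    have hhook := (hs.mem_cellsOf_and_hook_eq_diagIdx_sub hk hst ht).2
    have hgap := hs.diagIdx_succ hk (t := s) (by omega)
    have := hs.fst_lt_fst_of_lt (s := s + 1) (by omega) ht
    have := hs.snd_lt_snd_of_lt hk (s := s + 1) (by omega) ht
    have := hx.2
    simp only [diagIdx] at hhook hgap
    omega
  exact ⟨s + 1, by omega, ht, _, _, List.getElem?_eq_getElem ht, List.getElem?_eq_getElem _, rfl⟩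

theorem exists_head_of_fst_mem (hs : IsString k lam mu a) (hk : 2 ≤ k) {x : Cell}
    (hx : x ∈ bdry k lam) (hhook : hook lam x = k) (hR : ∃ y ∈ a, y.1 = x.1)
    (hC : ¬ ∃ y ∈ a, y.2 = x.2) : ∃ h, a.head? = some h ∧ IsLeftmostBdryInRow k lam h.1 x := by
  obtain ⟨_, hy, hyx⟩ := hR
  obtain ⟨t, ht, rfl⟩ := List.getElem_of_mem hy
  obtain rfl : t = 0 := by
    by_contra hne
    obtain ⟨s, rfl⟩ : ∃ s, t = s + 1 := ⟨t - 1, by omega⟩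
    exact hs.hook_ne_of_fst_eq_succ hk ht hx.1 hyx.symm
      (fun h => hC ⟨_, List.getElem_mem _, h.symm⟩) hhook
  refine ⟨a[0], List.head?_eq_getElem?.trans (List.getElem?_eq_getElem ht), hx, hyx.symm,
    fun c hc => not_lt.1 fun hlt => ?_⟩
  have := hs.1.hook_lt_hook_of_snd_lt hx.1 hlt
  have := hc.2
  rw [hyx] at this
  omega

theorem exists_getLast_of_snd_mem (hs : IsString k lam mu a) (hk : 2 ≤ k) {x : Cell}
    (hx : x ∈ bdry k lam) (hhook : hook lam x = k) (hR : ¬ ∃ y ∈ a, y.1 = x.1)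
    (hC : ∃ y ∈ a, y.2 = x.2) : ∃ h, a.getLast? = some h ∧ IsBottomBdryInCol k lam h.2 x := by
  obtain ⟨_, hy, hyx⟩ := hC
  obtain ⟨t, ht, rfl⟩ := List.getElem_of_mem hy
  obtain rfl : t = a.length - 1 := by
    by_contra hne
    exact hs.hook_ne_of_snd_eq hk (t := t) (by omega) hx.1 hyx.symm
      (fun h => hR ⟨_, List.getElem_mem _, h.symm⟩) hhook
  refine ⟨_, List.getLast?_eq_getElem?.trans (List.getElem?_eq_getElem ht), hx, hyx.symm,
    fun r hr => not_lt.1 fun hlt => ?_⟩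
  have := hs.1.hook_lt_hook_of_fst_lt hx.1 hlt
  have := hr.2
  rw [hyx] at this
  omega

theorem mem_bdry_sdiff_cases (hs : IsString k lam mu a) (hk : 2 ≤ k) {x : Cell}
    (hx : x ∈ bdry k lam \ bdry k mu) :
    (∃ i : ℕ, 1 ≤ i ∧ i < a.length ∧ ∃ p q : Cell, a[i]? = some p ∧ a[i - 1]? = some q ∧
        x = (p.1, q.2)) ∨
      (∃ h : Cell, a.head? = some h ∧ IsLeftmostBdryInRow k lam h.1 x ∧ hook lam x = k) ∨
      (∃ h : Cell, a.getLast? = some h ∧ IsBottomBdryInCol k lam h.2 x ∧ hook lam x = k) := by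
  obtain ⟨hxb, hkx⟩ := (mem_bdry_sdiff_iff hs.2.2.1).1 hx
  have hmu := hs.hook_mu_eq hk hxb.1
  have hxk := hxb.2
  by_cases hR : ∃ y ∈ a, y.1 = x.1 <;> by_cases hC : ∃ y ∈ a, y.2 = x.2 <;>
    simp only [hR, hC, if_true, if_false] at hmu
  · exact Or.inl (hs.exists_succ_of_fst_snd_mem hk hxb hR hC)
  · obtain ⟨h, hh, hleft⟩ := hs.exists_head_of_fst_mem hk hxb (by omega) hR hC
    exact Or.inr (Or.inl ⟨h, hh, hleft, by omega⟩)
  · obtain ⟨h, hh, hbot⟩ := hs.exists_getLast_of_snd_mem hk hxb (by omega) hR hC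
    exact Or.inr (Or.inr ⟨h, hh, hbot, by omega⟩)
  · omega

end IsString

/-- description of `∂λ \ ∂μ` for a string `μ/λ`. -/
theorem statement_2 (k : ℕ) (hk : 2 ≤ k) (lam mu : ℕ → ℕ) (a : List Cell)
    (hs : IsString k lam mu a) :
    (∀ i : ℕ, 1 ≤ i → i < a.length → ∀ p q : Cell, a[i]? = some p → a[i - 1]? = some q →
      ((p.1, q.2) : Cell) ∈ bdry k lam \ bdry k mu) ∧
    (∀ x h : Cell, a.head? = some h → IsLeftmostBdryInRow k lam h.1 x →
      (x ∈ bdry k lam \ bdry k mu ↔ hook lam x = k)) ∧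
    (∀ x h : Cell, a.getLast? = some h → IsBottomBdryInCol k lam h.2 x →
      (x ∈ bdry k lam \ bdry k mu ↔ hook lam x = k)) ∧
    (∀ x ∈ bdry k lam \ bdry k mu,
      (∃ i : ℕ, 1 ≤ i ∧ i < a.length ∧ ∃ p q : Cell, a[i]? = some p ∧ a[i - 1]? = some q ∧
        x = (p.1, q.2)) ∨
      (∃ h : Cell, a.head? = some h ∧ IsLeftmostBdryInRow k lam h.1 x ∧ hook lam x = k) ∨
      (∃ h : Cell, a.getLast? = some h ∧ IsBottomBdryInCol k lam h.2 x ∧ hook lam x = k)) := by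
  refine ⟨fun i hi1 hi p q hp hq => ?_, fun x h hh hx => ?_, fun x h hh hx => ?_,
    fun x hx => hs.mem_bdry_sdiff_cases hk hx⟩
  · obtain ⟨t, rfl⟩ : ∃ t, i = t + 1 := ⟨i - 1, by omega⟩
    rw [Nat.add_sub_cancel] at hq
    obtain ⟨_, rfl⟩ := List.getElem?_eq_some_iff.1 hp
    obtain ⟨_, rfl⟩ := List.getElem?_eq_some_iff.1 hq
    exact hs.mem_bdry_sdiff_of_succ hk hi
  · exact hs.mem_bdry_sdiff_iff_of_fst_eq_head hk hh hx.1 hx.2.1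
  · exact hs.mem_bdry_sdiff_iff_of_snd_eq_getLast hk hh hx.1 hx.2.1
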